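/- Let $K \in [0,1]$. There exists a constant $C > 0$ such that for all $t > 0$, all Borel sets $E, F \subseteq \mathbb{R}$ and all $f \in L^2(\mathbb{R},\mathbb{C})$: $\|\chi_F \cdot (p_t * (\chi_E f))\|_{L^2} \le C \left(1 + \frac{d(E,F)}{t}\right)^{-K} \|\chi_E f\|_{L^2}$. -/

import Mathlib

open MeasureTheory ENNReal

/-- The Poisson kernel `p_t(x) = (1/π) t/(x² + t²)` on `ℝ`. -/
noncomputable def poissonKernelR (t x : ℝ) : ℝ := (1 / Real.pi) * (t / (x ^ 2 + t ^ 2))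

/-- The distance `d(E,F) = inf {dist x y | x ∈ E, y ∈ F}` between two sets. -/
noncomputable def setDist {α : Type*} [PseudoMetricSpace α] (E F : Set α) : ℝ :=
  sInf (Set.image2 dist E F)

/-!
For `x ∈ F` and `y ∈ E` we have `|x - y| ≥ d := d(E,F)`, and `p_t(z) ≤ t/(|z| + t)²` because
`(|z| + t)² ≤ 2(z² + t²)`, so the kernel `χ_F(x) p_t(x - y) χ_E(y)` has mass at most
`2t/(t + d) = 2(1 + d/t)⁻¹` in each variable separately. Schur's test (Cauchy–Schwarz against the
kernel, then Tonelli) turns these row and column bounds into the operator bound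
`2(1 + d/t)⁻¹ ≤ 2(1 + d/t)^(-K)` on `L²`.
-/

open Set Filter Function

section Schur

variable {α β : Type*} [MeasurableSpace α] [MeasurableSpace β] {μ : Measure α} {ν : Measure β}

lemma sq_eLpNorm_two {E : Type*} [ENorm E] (f : α → E) :
    eLpNorm f 2 μ ^ 2 = ∫⁻ a, ‖f a‖ₑ ^ 2 ∂μ := by
  simpa using eLpNorm_nnreal_pow_eq_lintegral (f := f) (μ := μ) (p := 2) two_ne_zero

lemma sq_lintegral_mul_le {w f : α → ℝ≥0∞} (hw : AEMeasurable w μ) (hf : AEMeasurable f μ) :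
    (∫⁻ a, w a * f a ∂μ) ^ 2 ≤ (∫⁻ a, w a ∂μ) * ∫⁻ a, w a * f a ^ 2 ∂μ := by
  have hhalf : ((2 : ℕ) : ℝ)⁻¹ + ((2 : ℕ) : ℝ)⁻¹ = 1 := by norm_num
  have holder := ENNReal.lintegral_mul_norm_pow_le (g := fun a => w a * f a ^ 2) hw
    (hw.mul (hf.pow_const 2)) (by positivity) (by positivity) hhalf
  have hsqrt : ∀ a, w a ^ ((2 : ℕ) : ℝ)⁻¹ * (w a * f a ^ 2) ^ ((2 : ℕ) : ℝ)⁻¹ = w a * f a := by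
    intro a
    rw [← ENNReal.mul_rpow_of_nonneg _ _ (by positivity), ← mul_assoc, ← sq, ← mul_pow,
      ENNReal.pow_rpow_inv_natCast two_ne_zero]
  simp_rw [hsqrt] at holder
  calc (∫⁻ a, w a * f a ∂μ) ^ 2
      ≤ ((∫⁻ a, w a ∂μ) ^ ((2 : ℕ) : ℝ)⁻¹ * (∫⁻ a, w a * f a ^ 2 ∂μ) ^ ((2 : ℕ) : ℝ)⁻¹) ^ 2 := by
        gcongr
    _ = _ := by
        rw [mul_pow, ENNReal.rpow_inv_natCast_pow two_ne_zero,
          ENNReal.rpow_inv_natCast_pow two_ne_zero]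

variable [SFinite μ] [SFinite ν] {k : α → β → ℝ≥0∞}

lemma lintegral_sq_lintegral_mul_le (hk : Measurable (uncurry k)) {φ : β → ℝ≥0∞}
    (hφ : AEMeasurable φ ν) {A B : ℝ≥0∞} (hrow : ∀ x, ∫⁻ y, k x y ∂ν ≤ A)
    (hcol : ∀ y, ∫⁻ x, k x y ∂μ ≤ B) :
    ∫⁻ x, (∫⁻ y, k x y * φ y ∂ν) ^ 2 ∂μ ≤ A * B * ∫⁻ y, φ y ^ 2 ∂ν := by
  have hkφ : AEMeasurable (uncurry fun x y => k x y * φ y ^ 2) (μ.prod ν) :=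
    hk.aemeasurable.mul (hφ.comp_snd.pow_const 2)
  calc ∫⁻ x, (∫⁻ y, k x y * φ y ∂ν) ^ 2 ∂μ
      ≤ ∫⁻ x, A * ∫⁻ y, k x y * φ y ^ 2 ∂ν ∂μ := lintegral_mono fun x =>
        (sq_lintegral_mul_le hk.of_uncurry_left.aemeasurable hφ).trans (by gcongr; exact hrow x)
    _ = A * ∫⁻ y, φ y ^ 2 * ∫⁻ x, k x y ∂μ ∂ν := by
        rw [lintegral_const_mul'' A (f := fun x => ∫⁻ y, k x y * φ y ^ 2 ∂ν)
          hkφ.lintegral_prod_right', lintegral_lintegral_swap hkφ]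
        simp_rw [mul_comm _ (φ _ ^ 2)]
        congr 1
        exact lintegral_congr fun y => lintegral_const_mul _ hk.of_uncurry_right
    _ ≤ A * ∫⁻ y, φ y ^ 2 * B ∂ν := by gcongr with y; exact hcol y
    _ = A * B * ∫⁻ y, φ y ^ 2 ∂ν := by
        rw [lintegral_mul_const'' _ (hφ.pow_const 2), mul_assoc, mul_comm B]

lemma eLpNorm_two_le_of_kernel_bound {E F : Type*} [ENorm E] [NormedAddCommGroup F]
    {T : α → E} {g : β → F} (hg : AEStronglyMeasurable g ν) (hk : Measurable (uncurry k))
    (hT : ∀ x, ‖T x‖ₑ ≤ ∫⁻ y, k x y * ‖g y‖ₑ ∂ν) {A : ℝ≥0∞}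
    (hrow : ∀ x, ∫⁻ y, k x y ∂ν ≤ A) (hcol : ∀ y, ∫⁻ x, k x y ∂μ ≤ A) :
    eLpNorm T 2 μ ≤ A * eLpNorm g 2 ν := by
  rw [← ENNReal.pow_le_pow_left_iff two_ne_zero, mul_pow, sq_eLpNorm_two, sq_eLpNorm_two, sq A]
  calc ∫⁻ x, ‖T x‖ₑ ^ 2 ∂μ ≤ ∫⁻ x, (∫⁻ y, k x y * ‖g y‖ₑ ∂ν) ^ 2 ∂μ := by
        gcongr with x; exact hT x
    _ ≤ A * A * ∫⁻ y, ‖g y‖ₑ ^ 2 ∂ν := lintegral_sq_lintegral_mul_le hk hg.enorm hrow hcol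

end Schur

section PoissonKernel

lemma poissonKernelR_nonneg {t : ℝ} (ht : 0 ≤ t) (x : ℝ) : 0 ≤ poissonKernelR t x := by
  unfold poissonKernelR; positivity

lemma poissonKernelR_neg (t x : ℝ) : poissonKernelR t (-x) = poissonKernelR t x := by
  simp [poissonKernelR]

@[fun_prop]
lemma measurable_poissonKernelR (t : ℝ) : Measurable (poissonKernelR t) := by
  unfold poissonKernelR; fun_prop

lemma poissonKernelR_le {t : ℝ} (ht : 0 < t) (x : ℝ) :
    poissonKernelR t x ≤ t / (|x| + t) ^ 2 := by
  have hsq : (|x| + t) ^ 2 ≤ Real.pi * (x ^ 2 + t ^ 2) := by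
    nlinarith [sq_abs x, sq_nonneg (|x| - t), Real.pi_gt_three]
  rw [poissonKernelR, one_div_mul_eq_div, div_div, mul_comm]
  gcongr

lemma lintegral_Ioi_div_add_sq {t d : ℝ} (ht : 0 ≤ t) (hdt : 0 < d + t) :
    ∫⁻ u in Ioi d, ENNReal.ofReal (t / (u + t) ^ 2) = ENNReal.ofReal (t / (d + t)) := by
  have hderiv : ∀ u ∈ Ici d, HasDerivAt (fun u => -(t / (u + t))) (t / (u + t) ^ 2) u := by
    intro u hu
    have hu0 : u + t ≠ 0 := by linarith [mem_Ici.1 hu]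
    exact ((hasDerivAt_const u t).div ((hasDerivAt_id u).add_const t) hu0).neg.congr_deriv
      (by simp; ring)
  have hnonneg : ∀ u ∈ Ioi d, 0 ≤ t / (u + t) ^ 2 := fun u _ => by positivity
  have hlim : Tendsto (fun u => -(t / (u + t))) atTop (nhds 0) := by
    simpa using (tendsto_const_nhds.div_atTop (tendsto_atTop_add_const_right _ t tendsto_id)).neg
  rw [← ofReal_integral_eq_lintegral_ofReal (integrableOn_Ioi_deriv_of_nonneg' hderiv hnonneg hlim)
    ((ae_restrict_iff' measurableSet_Ioi).2 (.of_forall hnonneg)),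
    integral_Ioi_of_hasDerivAt_of_nonneg' hderiv hnonneg hlim, zero_sub, neg_neg]

lemma setLIntegral_poissonKernelR_sub_le {t d : ℝ} (ht : 0 < t) (hd : 0 ≤ d) {S : Set ℝ} {x : ℝ}
    (hS : ∀ s ∈ S, d ≤ |s - x|) :
    ∫⁻ s in S, ENNReal.ofReal (poissonKernelR t (s - x)) ≤ ENNReal.ofReal (2 * t / (t + d)) := by
  set ψ : ℝ → ℝ≥0∞ := (Ici d).indicator fun u => ENNReal.ofReal (t / (u + t) ^ 2)
  have hψ : Measurable ψ := by fun_prop (disch := exact measurableSet_Ici)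
  have hψ_eq : ∀ u, d ≤ u → ψ u = ENNReal.ofReal (t / (u + t) ^ 2) :=
    fun u hu => indicator_of_mem (mem_Ici.2 hu) _
  have hle : ∀ z, d ≤ |z| → ENNReal.ofReal (poissonKernelR t z) ≤ ψ z + ψ (-z) := by
    intro z hz
    refine (ENNReal.ofReal_le_ofReal (poissonKernelR_le ht z)).trans ?_
    rcases le_abs'.1 hz with hneg | hpos
    · refine le_add_left (le_of_eq ?_)
      rw [abs_of_nonpos (by linarith), hψ_eq _ (le_neg.1 hneg)]
    · refine le_add_right (le_of_eq ?_)
      rw [abs_of_nonneg (hd.trans hpos), hψ_eq _ hpos]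
  calc ∫⁻ s in S, ENNReal.ofReal (poissonKernelR t (s - x))
      ≤ ∫⁻ s in S, ψ (s - x) + ψ (-(s - x)) :=
        setLIntegral_mono (by fun_prop) fun s hs => hle _ (hS s hs)
    _ ≤ ∫⁻ s, ψ (s - x) + ψ (-(s - x)) := setLIntegral_le_lintegral _ _
    _ = ∫⁻ z, ψ z + ψ (-z) := lintegral_sub_right_eq_self (fun z => ψ z + ψ (-z)) x
    _ = 2 * ∫⁻ u in Ioi d, ENNReal.ofReal (t / (u + t) ^ 2) := by
        rw [lintegral_add_left hψ, lintegral_neg_eq_self, ← two_mul,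
          lintegral_indicator measurableSet_Ici, setLIntegral_congr Ioi_ae_eq_Ici.symm]
    _ = ENNReal.ofReal (2 * t / (t + d)) := by
        rw [lintegral_Ioi_div_add_sq ht.le (by linarith), ← ENNReal.ofReal_ofNat 2,
          ← ENNReal.ofReal_mul zero_le_two, mul_div_assoc, add_comm d]

lemma eLpNorm_indicator_poissonKernelR_conv_le {t d : ℝ} (ht : 0 < t) (hd : 0 ≤ d)
    {E F : Set ℝ} (hE : MeasurableSet E) (hF : MeasurableSet F)
    (hEF : ∀ x ∈ F, ∀ y ∈ E, d ≤ |x - y|) {f : ℝ → ℂ} (hf : AEStronglyMeasurable f) :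
    eLpNorm (F.indicator fun x => ∫ y, (poissonKernelR t (x - y) : ℂ) * E.indicator f y) 2 ≤
      ENNReal.ofReal (2 * t / (t + d)) * eLpNorm (E.indicator f) 2 := by
  set k : ℝ → ℝ → ℝ≥0∞ := fun x y =>
    (F ×ˢ E).indicator (fun q => ENNReal.ofReal (poissonKernelR t (q.1 - q.2))) (x, y)
  have hk : Measurable (uncurry k) :=
    (by fun_prop : Measurable fun q : ℝ × ℝ => ENNReal.ofReal (poissonKernelR t (q.1 - q.2))
      ).indicator (hF.prod hE)
  refine eLpNorm_two_le_of_kernel_bound (hf.indicator hE) hk (fun x => ?_) (fun x => ?_)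
    (fun y => ?_)
  · by_cases hx : x ∈ F
    · rw [indicator_of_mem hx]
      refine (enorm_integral_le_lintegral_enorm _).trans_eq (lintegral_congr fun y => ?_)
      by_cases hy : y ∈ E
      · rw [indicator_of_mem hy, enorm_mul, ← ofReal_norm, Complex.norm_real,
          Real.norm_of_nonneg (poissonKernelR_nonneg ht.le _)]
        simp [k, hx, hy]
      · simp [k, hy]
    · simp [hx]
  · by_cases hx : x ∈ F
    · calc ∫⁻ y, k x y
          = ∫⁻ y, E.indicator (fun y => ENNReal.ofReal (poissonKernelR t (y - x))) y :=
            lintegral_congr fun y => by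
              by_cases hy : y ∈ E
              · simp [k, hx, hy, ← poissonKernelR_neg t (x - y)]
              · simp [k, hy]
        _ ≤ _ := by
            rw [lintegral_indicator hE]
            exact setLIntegral_poissonKernelR_sub_le ht hd fun y hy =>
              abs_sub_comm x y ▸ hEF x hx y hy
    · simp [k, hx]
  · by_cases hy : y ∈ E
    · calc ∫⁻ x, k x y
          = ∫⁻ x, F.indicator (fun x => ENNReal.ofReal (poissonKernelR t (x - y))) x :=
            lintegral_congr fun x => by
              by_cases hx : x ∈ F
              · simp [k, hx, hy]
              · simp [k, hx]
        _ ≤ _ := by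
            rw [lintegral_indicator hF]
            exact setLIntegral_poissonKernelR_sub_le ht hd fun x hx => hEF x hx y hy
    · simp [k, hy]

end PoissonKernel

lemma setDist_nonneg {α : Type*} [PseudoMetricSpace α] (E F : Set α) : 0 ≤ setDist E F :=
  Real.sInf_nonneg (by rintro _ ⟨x, -, y, -, rfl⟩; exact dist_nonneg)

lemma setDist_le_dist {α : Type*} [PseudoMetricSpace α] {E F : Set α} {x y : α} (hx : x ∈ E)
    (hy : y ∈ F) : setDist E F ≤ dist x y :=
  csInf_le ⟨0, by rintro _ ⟨x, -, y, -, rfl⟩; exact dist_nonneg⟩ (mem_image2_of_mem hx hy)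

theorem stmt2_general (K : ℝ) (hK1 : K ≤ 1) :
    ∃ C : ℝ, 0 < C ∧ ∀ t : ℝ, 0 < t → ∀ E F : Set ℝ, MeasurableSet E → MeasurableSet F →
      ∀ f : ℝ → ℂ, MemLp f 2 (volume : Measure ℝ) →
      eLpNorm (F.indicator fun x => ∫ y, (poissonKernelR t (x - y) : ℂ) * E.indicator f y)
          2 volume ≤
        ENNReal.ofReal (C * (1 + setDist E F / t) ^ (-K)) * eLpNorm (E.indicator f) 2 volume := by
  refine ⟨2, two_pos, fun t ht E F hE hF f hf => ?_⟩
  have hd : 0 ≤ setDist E F := setDist_nonneg E F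
  have hEF : ∀ x ∈ F, ∀ y ∈ E, setDist E F ≤ |x - y| := fun x hx y hy => by
    rw [← Real.dist_eq, dist_comm]
    exact setDist_le_dist hy hx
  refine (eLpNorm_indicator_poissonKernelR_conv_le ht hd hE hF hEF hf.1).trans ?_
  gcongr
  calc 2 * t / (t + setDist E F) = 2 * (1 + setDist E F / t) ^ (-1 : ℝ) := by
        rw [Real.rpow_neg_one]
        field_simp
    _ ≤ 2 * (1 + setDist E F / t) ^ (-K) := by
        gcongr
        exact le_add_of_nonneg_right (by positivity)

/-- For every `K ∈ [0,1]` there is `C > 0` such that for all `t > 0`, Borel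
sets `E, F ⊆ ℝ` and `f ∈ L²(ℝ,ℂ)`:
`‖χ_F ⬝ (p_t * (χ_E f))‖_{L²} ≤ C (1 + d(E,F)/t)^{-K} ‖χ_E f‖_{L²}`. -/
theorem stmt2 (K : ℝ) (hK0 : 0 ≤ K) (hK1 : K ≤ 1) :
    ∃ C : ℝ, 0 < C ∧ ∀ t : ℝ, 0 < t → ∀ E F : Set ℝ, MeasurableSet E → MeasurableSet F →
      ∀ f : ℝ → ℂ, MemLp f 2 (volume : Measure ℝ) →
      eLpNorm (F.indicator fun x => ∫ y, (poissonKernelR t (x - y) : ℂ) * E.indicator f y)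
          2 volume ≤
        ENNReal.ofReal (C * (1 + setDist E F / t) ^ (-K)) * eLpNorm (E.indicator f) 2 volume :=
  stmt2_general K hK1
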